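/- In the nilpotent Matsuo algebra A of a Fischer space over a ring R of characteristic 2, if ℓ is a line with line nilpotent s_ℓ (the sum of the three points of ℓ), and x is a point such that either x ∈ ℓ or x is not collinear with any point of ℓ, then x·s_ℓ = 0 in A. -/

import Mathlib

/-- A partial triple system, given by a collinearity relation `col` and a map `third`
sending two distinct collinear points to the third point on their line. -/
structure IsPTS {P : Type*} (col : P → P → Prop) (third : P → P → P) : Prop where
  symm : ∀ x y, col x y → col y x
  irrefl : ∀ x, ¬ col x x
  third_symm : ∀ x y, col x y → third x y = third y x
  col_third : ∀ x y, col x y → col x (third x y)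
  third_ne_left : ∀ x y, col x y → third x y ≠ x
  third_ne_right : ∀ x y, col x y → third x y ≠ y
  third_third : ∀ x y, col x y → third x (third x y) = y
  unique_line : ∀ x y u v, col x y → col u v →
    x ∈ ({u, v, third u v} : Set P) → y ∈ ({u, v, third u v} : Set P) →
    ({x, y, third x y} : Set P) = {u, v, third u v}

/-- A subspace of a partial triple system: a set of points closed under taking
the third point of a line through two of its points. -/
def IsSubspace {P : Type*} (col : P → P → Prop) (third : P → P → P) (S : Set P) : Prop :=
  ∀ x ∈ S, ∀ y ∈ S, col x y → third x y ∈ S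

/-- The subspace generated by a set of points. -/
def fclosure {P : Type*} (col : P → P → Prop) (third : P → P → P) (T : Set P) : Set P :=
  ⋂₀ {S | T ⊆ S ∧ IsSubspace col third S}

/-- The line through two distinct collinear points, as a set. -/
def lineSet {P : Type*} (third : P → P → P) (x y : P) : Set P := {x, y, third x y}

/-- The six points of the complete quadrilateral (dual affine plane of order 2). -/
inductive CQPt | A | B | C | X | Y | Z
deriving DecidableEq

/-- The "opposite point" involution of the complete quadrilateral. -/
def CQPt.opp : CQPt → CQPt
  | .A => .X | .X => .A | .B => .Y | .Y => .B | .C => .Z | .Z => .C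

/-- Collinearity in the complete quadrilateral with lines
{A,B,C}, {A,Y,Z}, {B,X,Z}, {C,X,Y}: two points are collinear iff they are
distinct and not opposite. -/
def CQPt.col (p q : CQPt) : Prop := p ≠ q ∧ q ≠ p.opp

/-- The third point on the line through two distinct collinear points of the
complete quadrilateral. -/
def CQPt.third : CQPt → CQPt → CQPt
  | .A, .B => .C | .B, .A => .C | .A, .C => .B | .C, .A => .B | .B, .C => .A | .C, .B => .A
  | .A, .Y => .Z | .Y, .A => .Z | .A, .Z => .Y | .Z, .A => .Y | .Y, .Z => .A | .Z, .Y => .A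
  | .B, .X => .Z | .X, .B => .Z | .B, .Z => .X | .Z, .B => .X | .X, .Z => .B | .Z, .X => .B
  | .C, .X => .Y | .X, .C => .Y | .C, .Y => .X | .Y, .C => .X | .X, .Y => .C | .Y, .X => .C
  | p, _ => p

/-- A set of points is a complete quadrilateral if it is the isomorphic image of
the standard one (preserving collinearity and the `third` operation). -/
def IsCQSet {P : Type*} (col : P → P → Prop) (third : P → P → P) (S : Set P) : Prop :=
  ∃ f : CQPt → P, Function.Injective f ∧ Set.range f = S ∧
    (∀ u v, col (f u) (f v) ↔ CQPt.col u v) ∧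
    (∀ u v, CQPt.col u v → f (CQPt.third u v) = third (f u) (f v))

/-- A set of points is an affine plane of order 3 if it is the isomorphic image of
`AG(2,3)` (any two distinct points collinear, third point `-(u+v)`). -/
def IsAPSet {P : Type*} (col : P → P → Prop) (third : P → P → P) (S : Set P) : Prop :=
  ∃ f : ZMod 3 × ZMod 3 → P, Function.Injective f ∧ Set.range f = S ∧
    (∀ u v, col (f u) (f v) ↔ u ≠ v) ∧
    (∀ u v, u ≠ v → f (-(u + v)) = third (f u) (f v))

/-- A Fischer space: a partial triple system in which the subspace generated by two
distinct intersecting lines is a complete quadrilateral or an affine plane of order 3. -/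
structure IsFischer {P : Type*} (col : P → P → Prop) (third : P → P → P)
    extends IsPTS col third : Prop where
  dichotomy : ∀ x y u v, col x y → col u v →
    lineSet third x y ≠ lineSet third u v →
    (lineSet third x y ∩ lineSet third u v).Nonempty →
    IsCQSet col third (fclosure col third (lineSet third x y ∪ lineSet third u v)) ∨
    IsAPSet col third (fclosure col third (lineSet third x y ∪ lineSet third u v))

/-- A Fischer space of symplectic type: the subspace generated by two distinct
intersecting lines is always a complete quadrilateral. -/
structure IsSymplectic {P : Type*} (col : P → P → Prop) (third : P → P → P)
    extends IsPTS col third : Prop where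
  cq : ∀ x y u v, col x y → col u v →
    lineSet third x y ≠ lineSet third u v →
    (lineSet third x y ∩ lineSet third u v).Nonempty →
    IsCQSet col third (fclosure col third (lineSet third x y ∪ lineSet third u v))

/-- `A` is the nilpotent Matsuo algebra (char 2) of the geometry `(col, third)`,
with `e` the natural basis indexed by the points. -/
structure IsNilMatsuo (R : Type*) {A P : Type*} [CommRing R] [NonUnitalNonAssocCommRing A]
    [Module R A] (col : P → P → Prop) (third : P → P → P) (e : P → A) : Prop where
  char2 : (2 : R) = 0
  mul_same : ∀ p, e p * e p = 0
  mul_of_not_col : ∀ p q, p ≠ q → ¬ col p q → e p * e q = 0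
  mul_of_col : ∀ p q, p ≠ q → col p q → e p * e q = e p + e q + e (third p q)

/-! Multiplying the line nilpotent `s = p + q + r` of a line `{p, q, r}` by one of its points `p`
gives `(p + q + r) + (p + r + q) = 2 (p + q + r)`, which vanishes in characteristic 2; a point
collinear with no point of the line multiplies every summand of `s` to zero. -/

namespace IsPTS

variable {P : Type*} {col : P → P → Prop} {third : P → P → P} {x y : P}

theorem ne_of_col (h : IsPTS col third) (hxy : col x y) : x ≠ y :=
  fun hEq => h.irrefl y (hEq ▸ hxy)

theorem third_third_left (h : IsPTS col third) (hxy : col x y) :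
    third (third x y) x = y := by
  rw [← h.third_symm x _ (h.col_third x y hxy)]
  exact h.third_third x y hxy

end IsPTS

namespace IsNilMatsuo

variable {R A P : Type*} [CommRing R] [NonUnitalNonAssocCommRing A] [Module R A]
  {col : P → P → Prop} {third : P → P → P} {e : P → A}

theorem add_self (hM : IsNilMatsuo R col third e) (a : A) : a + a = 0 := by
  rw [← two_smul R a, hM.char2, zero_smul]

theorem mul_eq_zero_of_not_col (hM : IsNilMatsuo R col third e) {x y : P} (h : ¬ col x y) :
    e x * e y = 0 := by
  obtain rfl | hxy := eq_or_ne x y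
  · exact hM.mul_same x
  · exact hM.mul_of_not_col x y hxy h

variable {p q : P}

theorem mul_lineSum_self (hT : IsPTS col third) (hM : IsNilMatsuo R col third e)
    (hpq : col p q) : e p * (e p + e q + e (third p q)) = 0 := by
  have hpr := hT.col_third p q hpq
  rw [mul_add, mul_add, hM.mul_same, hM.mul_of_col p q (hT.ne_of_col hpq) hpq,
    hM.mul_of_col p _ (hT.ne_of_col hpr) hpr, hT.third_third p q hpq, zero_add]
  calc e p + e q + e (third p q) + (e p + e (third p q) + e q)
      = (e p + e q + e (third p q)) + (e p + e q + e (third p q)) := by abel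
    _ = 0 := hM.add_self _

theorem mul_lineSum_of_mem (hT : IsPTS col third) (hM : IsNilMatsuo R col third e)
    (hpq : col p q) {x : P} (hx : x ∈ lineSet third p q) :
    e x * (e p + e q + e (third p q)) = 0 := by
  rcases hx with rfl | rfl | rfl
  · exact hM.mul_lineSum_self hT hpq
  · rw [add_comm (e p), hT.third_symm p x hpq]
    exact hM.mul_lineSum_self hT (hT.symm p x hpq)
  · have hrp := hT.symm p _ (hT.col_third p q hpq)
    have hsum : e p + e q + e (third p q) = e (third p q) + e p + e (third (third p q) p) := by
      rw [hT.third_third_left hpq]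
      abel
    rw [hsum]
    exact hM.mul_lineSum_self hT hrp

theorem mul_lineSum_of_forall_not_col (hM : IsNilMatsuo R col third e) {x : P}
    (hx : ∀ w ∈ lineSet third p q, ¬ col x w) : e x * (e p + e q + e (third p q)) = 0 := by
  rw [mul_add, mul_add, hM.mul_eq_zero_of_not_col (hx p (by simp [lineSet])),
    hM.mul_eq_zero_of_not_col (hx q (by simp [lineSet])),
    hM.mul_eq_zero_of_not_col (hx (third p q) (by simp [lineSet])), add_zero, add_zero]

end IsNilMatsuo

theorem stmt3_general {R A P : Type*} [CommRing R] [NonUnitalNonAssocCommRing A]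
    [Module R A]
    (col : P → P → Prop) (third : P → P → P)
    (hF : IsFischer col third)
    (e : Module.Basis P R A) (hM : IsNilMatsuo R col third ⇑e)
    (p q : P) (hpq : col p q) (x : P)
    (hx : x ∈ lineSet third p q ∨ ∀ w ∈ lineSet third p q, ¬ col x w) :
    e x * (e p + e q + e (third p q)) = 0 := by
  rcases hx with hx | hx
  · exact hM.mul_lineSum_of_mem hF.toIsPTS hpq hx
  · exact hM.mul_lineSum_of_forall_not_col hx

/-- In the nilpotent Matsuo algebra of a Fischer space over a commutative ring of
characteristic 2: if `ℓ` is a line (through the collinear points `p, q`) with line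
nilpotent `s_ℓ = p + q + (p ∧ q)`, and `x` is a point which lies on `ℓ` or is not
collinear with any point of `ℓ`, then `x · s_ℓ = 0`. -/
theorem stmt3 {R A P : Type*} [CommRing R] [NonUnitalNonAssocCommRing A]
    [Module R A] [SMulCommClass R A A] [IsScalarTower R A A]
    (col : P → P → Prop) (third : P → P → P)
    (hF : IsFischer col third)
    (e : Module.Basis P R A) (hM : IsNilMatsuo R col third ⇑e)
    (p q : P) (hpq : col p q) (x : P)
    (hx : x ∈ lineSet third p q ∨ ∀ w ∈ lineSet third p q, ¬ col x w) :
    e x * (e p + e q + e (third p q)) = 0 :=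
  stmt3_general col third hF e hM p q hpq x hx
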